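/- Let a(r) = (1/2)√((r−3)(r+1)), b(r) = √((r−3)(r+1))/(r−1), c(r) = √((r²−1)/2), h(r) = (r−1)/√((r−3)(r+1)) be the 𝔹₈ metric functions on (3, ∞), and define u₁(r) = −2(5r³−9r²+15r−3)/((r−1)³(r+1)⁴), u₂(r) = (r−3)(5r²−2r+1)/((r−1)³(r+1)⁴), u₃(r) = −2(r−3)/((r−1)²(r+1)⁴). Then for all r > 3 the harmonic 4-form equations (55) with the opposite duality hold: −(1/h)(c⁴u₁)' − 2bc²u₂ + 4ac²u₃ = 0, −(1/h)(a²c²u₂)' − a²b u₁ + bc²u₂ + 2ac²u₃ = 0, and −(1/h)(abc²u₃)' + a²b u₁ + bc²u₂ = 0, primes denoting d/dr. (These u_i define the second, self-dual L²-normalisable harmonic 4-form of the Spin(7) manifold 𝔹₈.) -/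

import Mathlib

/-!
On `(3, ∞)` the square roots in the `𝔹₈` metric enter only through `a`: one has
`1/h = b = 2a/(r-1)`, `a² = (r-3)(r+1)/4` and `c² = (r²-1)/2`. Hence the three potentials
`c⁴u₁`, `a²c²u₂`, `abc²u₃` are rational functions of `r`, differentiated by the quotient rule,
and each of the three equations becomes `a` times an identity between rational functions of `r`.
-/

open Filter Set

namespace B8

noncomputable def a (r : ℝ) : ℝ := 1 / 2 * Real.sqrt ((r - 3) * (r + 1))

noncomputable def b (r : ℝ) : ℝ := Real.sqrt ((r - 3) * (r + 1)) / (r - 1)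

noncomputable def c (r : ℝ) : ℝ := Real.sqrt ((r ^ 2 - 1) / 2)

noncomputable def h (r : ℝ) : ℝ := (r - 1) / Real.sqrt ((r - 3) * (r + 1))

noncomputable def u₁ (r : ℝ) : ℝ :=
  -2 * (5 * r ^ 3 - 9 * r ^ 2 + 15 * r - 3) / ((r - 1) ^ 3 * (r + 1) ^ 4)

noncomputable def u₂ (r : ℝ) : ℝ :=
  (r - 3) * (5 * r ^ 2 - 2 * r + 1) / ((r - 1) ^ 3 * (r + 1) ^ 4)

noncomputable def u₃ (r : ℝ) : ℝ := -2 * (r - 3) / ((r - 1) ^ 2 * (r + 1) ^ 4)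

variable {r : ℝ}

theorem one_div_h (r : ℝ) : 1 / h r = b r := one_div_div _ _

theorem b_eq (r : ℝ) : b r = 2 * a r / (r - 1) := by
  rw [a, b]
  ring

theorem a_sq (hr : 3 ≤ r) : a r ^ 2 = (r - 3) * (r + 1) / 4 := by
  rw [a, mul_pow, Real.sq_sqrt (by nlinarith)]
  ring

theorem c_sq (hr : 1 ≤ r) : c r ^ 2 = (r ^ 2 - 1) / 2 :=
  Real.sq_sqrt (by nlinarith)

theorem c_pow_four_mul_u₁ (hr : 1 < r) :
    c r ^ 4 * u₁ r = -(5 * r ^ 3 - 9 * r ^ 2 + 15 * r - 3) / (2 * (r - 1) * (r + 1) ^ 2) := by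
  have h₁ : r - 1 ≠ 0 := by linarith
  have h₂ : r + 1 ≠ 0 := by linarith
  rw [show c r ^ 4 = (c r ^ 2) ^ 2 by ring, c_sq hr.le, u₁]
  field_simp
  ring

theorem a_sq_mul_c_sq_mul_u₂ (hr : 3 ≤ r) :
    a r ^ 2 * c r ^ 2 * u₂ r =
      (r - 3) ^ 2 * (5 * r ^ 2 - 2 * r + 1) / (8 * (r - 1) ^ 2 * (r + 1) ^ 2) := by
  have h₁ : r - 1 ≠ 0 := by linarith
  have h₂ : r + 1 ≠ 0 := by linarith
  rw [a_sq hr, c_sq (by linarith), u₂]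
  field_simp
  ring

theorem a_mul_b_mul_c_sq_mul_u₃ (hr : 3 ≤ r) :
    a r * b r * c r ^ 2 * u₃ r = -(r - 3) ^ 2 / (2 * (r - 1) ^ 2 * (r + 1) ^ 2) := by
  have h₁ : r - 1 ≠ 0 := by linarith
  have h₂ : r + 1 ≠ 0 := by linarith
  have hab : a r * b r = 2 * a r ^ 2 / (r - 1) := by
    rw [b_eq]
    ring
  rw [hab, a_sq hr, c_sq (by linarith), u₃]
  field_simp
  ring

theorem hasDerivAt_c_pow_four_mul_u₁ (hr : 1 < r) :
    HasDerivAt (fun s => c s ^ 4 * u₁ s)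
      (-((r - 3) * (7 * r ^ 2 - 6 * r + 3)) / ((r - 1) ^ 2 * (r + 1) ^ 3)) r := by
  have h₁ : r - 1 ≠ 0 := by linarith
  have h₂ : r + 1 ≠ 0 := by linarith
  have hP := ((((hasDerivAt_pow 3 r).const_mul 5).fun_sub
    ((hasDerivAt_pow 2 r).const_mul 9)).fun_add ((hasDerivAt_id' r).const_mul 15)).sub_const 3
    |>.fun_neg
  have hQ := (((hasDerivAt_id' r).sub_const 1).const_mul 2).fun_mul
    (((hasDerivAt_id' r).add_const 1).fun_pow 2)
  refine ((hP.fun_div hQ (by simp [h₁, h₂])).congr_deriv ?_).congr_of_eventuallyEq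
    (eventuallyEq_of_mem (Ioi_mem_nhds hr) fun s hs => c_pow_four_mul_u₁ hs)
  field_simp
  ring

theorem hasDerivAt_a_sq_mul_c_sq_mul_u₂ (hr : 3 < r) :
    HasDerivAt (fun s => a s ^ 2 * c s ^ 2 * u₂ s)
      ((r - 3) * (4 * r ^ 3 - 5 * r ^ 2 + 6 * r - 1) / ((r - 1) ^ 3 * (r + 1) ^ 3)) r := by
  have h₁ : r - 1 ≠ 0 := by linarith
  have h₂ : r + 1 ≠ 0 := by linarith
  have hP := (((hasDerivAt_id' r).sub_const 3).fun_pow 2).fun_mul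
    ((((hasDerivAt_pow 2 r).const_mul 5).fun_sub ((hasDerivAt_id' r).const_mul 2)).add_const 1)
  have hQ := ((((hasDerivAt_id' r).sub_const 1).fun_pow 2).const_mul 8).fun_mul
    (((hasDerivAt_id' r).add_const 1).fun_pow 2)
  refine ((hP.fun_div hQ (by simp [h₁, h₂])).congr_deriv ?_).congr_of_eventuallyEq
    (eventuallyEq_of_mem (Ioi_mem_nhds hr) fun s hs => a_sq_mul_c_sq_mul_u₂ (le_of_lt hs))
  field_simp
  ring

theorem hasDerivAt_a_mul_b_mul_c_sq_mul_u₃ (hr : 3 < r) :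
    HasDerivAt (fun s => a s * b s * c s ^ 2 * u₃ s)
      ((r - 3) * (r ^ 2 - 6 * r + 1) / ((r - 1) ^ 3 * (r + 1) ^ 3)) r := by
  have h₁ : r - 1 ≠ 0 := by linarith
  have h₂ : r + 1 ≠ 0 := by linarith
  have hP := (((hasDerivAt_id' r).sub_const 3).fun_pow 2).fun_neg
  have hQ := ((((hasDerivAt_id' r).sub_const 1).fun_pow 2).const_mul 2).fun_mul
    (((hasDerivAt_id' r).add_const 1).fun_pow 2)
  refine ((hP.fun_div hQ (by simp [h₁, h₂])).congr_deriv ?_).congr_of_eventuallyEq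
    (eventuallyEq_of_mem (Ioi_mem_nhds hr) fun s hs => a_mul_b_mul_c_sq_mul_u₃ (le_of_lt hs))
  field_simp
  ring

end B8

/-- The second, self-dual `L²`-normalisable harmonic 4-form of the Spin(7)
manifold `𝔹₈`: with the `𝔹₈` metric functions
`a = (1/2)√((r-3)(r+1))`, `b = √((r-3)(r+1))/(r-1)`, `c = √((r²-1)/2)`,
`h = (r-1)/√((r-3)(r+1))` on `(3, ∞)`, the functions
`u₁ = -2(5r³-9r²+15r-3)/((r-1)³(r+1)⁴)`,
`u₂ = (r-3)(5r²-2r+1)/((r-1)³(r+1)⁴)`,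
`u₃ = -2(r-3)/((r-1)²(r+1)⁴)` satisfy the harmonic 4-form
equations (55) with the opposite duality:
`-(1/h)(c⁴u₁)' - 2bc²u₂ + 4ac²u₃ = 0`,
`-(1/h)(a²c²u₂)' - a²b u₁ + bc²u₂ + 2ac²u₃ = 0`,
`-(1/h)(abc²u₃)' + a²b u₁ + bc²u₂ = 0`. -/
theorem B8_selfdual_harmonic_four_form
    (a b c h u₁ u₂ u₃ : ℝ → ℝ)
    (hadef : a = fun r => (1 / 2) * Real.sqrt ((r - 3) * (r + 1)))
    (hbdef : b = fun r => Real.sqrt ((r - 3) * (r + 1)) / (r - 1))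
    (hcdef : c = fun r => Real.sqrt ((r ^ 2 - 1) / 2))
    (hhdef : h = fun r => (r - 1) / Real.sqrt ((r - 3) * (r + 1)))
    (hu₁ : u₁ = fun r =>
      -2 * (5 * r ^ 3 - 9 * r ^ 2 + 15 * r - 3) / ((r - 1) ^ 3 * (r + 1) ^ 4))
    (hu₂ : u₂ = fun r =>
      (r - 3) * (5 * r ^ 2 - 2 * r + 1) / ((r - 1) ^ 3 * (r + 1) ^ 4))
    (hu₃ : u₃ = fun r =>
      -2 * (r - 3) / ((r - 1) ^ 2 * (r + 1) ^ 4)) :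
    ∀ r ∈ Set.Ioi (3 : ℝ),
      -((1 / h r) * deriv (fun s => (c s) ^ 4 * u₁ s) r)
          - 2 * b r * (c r) ^ 2 * u₂ r + 4 * a r * (c r) ^ 2 * u₃ r = 0 ∧
      -((1 / h r) * deriv (fun s => (a s) ^ 2 * (c s) ^ 2 * u₂ s) r)
          - (a r) ^ 2 * b r * u₁ r + b r * (c r) ^ 2 * u₂ r
          + 2 * a r * (c r) ^ 2 * u₃ r = 0 ∧
      -((1 / h r) * deriv (fun s => a s * b s * (c s) ^ 2 * u₃ s) r)
          + (a r) ^ 2 * b r * u₁ r + b r * (c r) ^ 2 * u₂ r = 0 := by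
  obtain rfl : a = B8.a := hadef
  obtain rfl : b = B8.b := hbdef
  obtain rfl : c = B8.c := hcdef
  obtain rfl : h = B8.h := hhdef
  obtain rfl : u₁ = B8.u₁ := hu₁
  obtain rfl : u₂ = B8.u₂ := hu₂
  obtain rfl : u₃ = B8.u₃ := hu₃
  intro r (hr : 3 < r)
  have h₁ : r - 1 ≠ 0 := by linarith
  have h₂ : r + 1 ≠ 0 := by linarith
  rw [(B8.hasDerivAt_c_pow_four_mul_u₁ (by linarith)).deriv,
    (B8.hasDerivAt_a_sq_mul_c_sq_mul_u₂ hr).deriv, (B8.hasDerivAt_a_mul_b_mul_c_sq_mul_u₃ hr).deriv,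
    B8.one_div_h, B8.b_eq, B8.a_sq hr.le, B8.c_sq (by linarith), B8.u₁, B8.u₂, B8.u₃]
  refine ⟨?_, ?_, ?_⟩ <;> field_simp <;> ring
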